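/- The dihedral group D_{12} ≅ Sym(3) × C_2 has exactly 13 nonpower subgroups. -/

import Mathlib

/-- The power subgroup `G^m`: the subgroup generated by all `m`-th powers. -/
def powSub (G : Type*) [Group G] (m : ℕ) : Subgroup G :=
  Subgroup.closure {x : G | ∃ g : G, g ^ m = x}

/-- A subgroup is a nonpower subgroup if it is not `G^m` for any `m ≥ 1`. -/
def IsNonpower {G : Type*} [Group G] (H : Subgroup G) : Prop :=
  ¬ ∃ m : ℕ, 0 < m ∧ H = powSub G m

/-- The number of nonpower subgroups of `G`. -/
noncomputable def nps (G : Type*) [Group G] : ℕ :=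
  Nat.card {H : Subgroup G // IsNonpower H}

/-- The number of power subgroups of `G`. -/
noncomputable def ps (G : Type*) [Group G] : ℕ :=
  Nat.card {H : Subgroup G // ∃ m : ℕ, 0 < m ∧ H = powSub G m}

/-- The total number of subgroups of `G`. -/
noncomputable def numSubgroups (G : Type*) [Group G] : ℕ :=
  Nat.card (Subgroup G)

/-! An odd power of a reflection is the reflection itself and reflections generate the dihedral
group, so `G^m = G` for odd `m`; an even power of a reflection is trivial, so `G^m = ⟨r^m⟩` for
even `m`. In `D₁₂` this leaves the three power subgroups `G`, `⟨r^2⟩ = ⟨r^4⟩` and `1`, which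
have different orders, out of the 16 subgroups of `D₁₂` (counted by exhaustive search). -/

section

variable {G : Type*} [Group G]

theorem pow_mem_powSub (g : G) (m : ℕ) : g ^ m ∈ powSub G m :=
  Subgroup.subset_closure ⟨g, rfl⟩

theorem nps_add_ps [Finite G] : nps G + ps G = numSubgroups G := by
  classical
  rw [nps, ps, numSubgroups, add_comm, ← Nat.card_sum]
  exact Nat.card_congr (Equiv.sumCompl _)

variable (G) in
/-- A decidable model of the subgroups of a finite group, used to count them by `decide`. -/
noncomputable def Subgroup.equivFinsetDivClosed [Fintype G] [DecidableEq G] :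
    Subgroup G ≃ {s : Finset G // 1 ∈ s ∧ ∀ a ∈ s, ∀ b ∈ s, a * b⁻¹ ∈ s} where
  toFun H := ⟨(H : Set G).toFinite.toFinset, by simp,
    by simpa using fun a ha b hb => H.mul_mem ha (H.inv_mem hb)⟩
  invFun s := Subgroup.ofDiv s ⟨1, s.2.1⟩ s.2.2
  left_inv H := by ext; simp [Subgroup.ofDiv]
  right_inv s := by ext; simp [Subgroup.ofDiv]

end

namespace DihedralGroup

variable {n : ℕ}

theorem sr_pow_of_odd (i : ZMod n) {m : ℕ} (hm : Odd m) : sr i ^ m = sr i := by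
  obtain ⟨k, rfl⟩ := hm
  rw [pow_succ, pow_mul, sq, sr_mul_self, one_pow, one_mul]

theorem sr_pow_of_even (i : ZMod n) {m : ℕ} (hm : Even m) : sr i ^ m = 1 := by
  obtain ⟨k, rfl⟩ := hm
  rw [← two_mul, pow_mul, sq, sr_mul_self, one_pow]

theorem powSub_of_odd {m : ℕ} (hm : Odd m) : powSub (DihedralGroup n) m = ⊤ := by
  have hsr (i : ZMod n) : sr i ∈ powSub (DihedralGroup n) m :=
    sr_pow_of_odd i hm ▸ pow_mem_powSub _ m
  refine eq_top_iff.2 fun g _ => ?_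
  rcases g with i | i
  · simpa [sr_mul_sr] using mul_mem (hsr 0) (hsr i)
  · exact hsr i

theorem powSub_of_even {m : ℕ} (hm : Even m) :
    powSub (DihedralGroup n) m = Subgroup.zpowers (r m) := by
  refine le_antisymm (Subgroup.closure_le _ |>.2 ?_) (Subgroup.zpowers_le.2 ?_)
  · rintro _ ⟨i | i, rfl⟩
    · rw [r_pow, ← ZMod.intCast_zmod_cast i, mul_comm, ← Int.cast_natCast, ← r_zpow]
      exact Subgroup.zpow_mem_zpowers _ _
    · rw [sr_pow_of_even i hm]
      exact one_mem _
  · simpa [r_one_pow] using pow_mem_powSub (r 1 : DihedralGroup n) m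

end DihedralGroup

open DihedralGroup

theorem powSub_dihedralGroup_six (m : ℕ) :
    powSub (DihedralGroup 6) m ∈ ({⊤, Subgroup.zpowers (r 2), ⊥} : Set _) := by
  rcases Nat.even_or_odd m with hm | hm
  · rw [powSub_of_even hm, ← ZMod.natCast_mod]
    have : m % 6 = 0 ∨ m % 6 = 2 ∨ m % 6 = 4 := by
      obtain ⟨k, rfl⟩ := hm
      omega
    rcases this with h | h | h <;> rw [h]
    · exact .inr <| .inr <| (congrArg _ r_zero).trans Subgroup.zpowers_one_eq_bot
    · exact .inr <| .inl rfl
    · exact .inr <| .inl <| Subgroup.zpowers_inv (g := r 2)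
  · simp [powSub_of_odd hm]

theorem card_zpowers_r_two_dihedralGroup_six : Nat.card (Subgroup.zpowers (r 2 : DihedralGroup 6)) = 3 := by
  rw [Nat.card_zpowers, orderOf_r]
  rfl

theorem setOf_powerSubgroups_dihedralGroup_six :
    {H : Subgroup (DihedralGroup 6) | ∃ m, 0 < m ∧ H = powSub _ m} =
      {⊤, Subgroup.zpowers (r 2), ⊥} := by
  refine Set.Subset.antisymm (fun H ⟨m, _, hH⟩ => hH ▸ powSub_dihedralGroup_six m) ?_
  rintro H (rfl | rfl | rfl)
  · exact ⟨1, one_pos, (powSub_of_odd odd_one).symm⟩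
  · exact ⟨2, two_pos, (powSub_of_even even_two).symm⟩
  · refine ⟨6, by norm_num, ?_⟩
    rw [powSub_of_even (by decide), ZMod.natCast_self, r_zero, Subgroup.zpowers_one_eq_bot]

theorem ps_dihedralGroup_six : ps (DihedralGroup 6) = 3 := by
  have hcard : Nat.card (⊤ : Subgroup (DihedralGroup 6)) = 12 :=
    Subgroup.card_top.trans nat_card
  rw [ps, ← Set.coe_ofPred, Nat.card_coe_set_eq, setOf_powerSubgroups_dihedralGroup_six,
    Set.ncard_eq_three]
  refine ⟨_, _, _, fun h => ?_, fun h => ?_, fun h => ?_, rfl⟩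
  · rw [h, card_zpowers_r_two_dihedralGroup_six] at hcard
    omega
  · rw [h, Subgroup.card_bot] at hcard
    omega
  · have := card_zpowers_r_two_dihedralGroup_six
    rw [h, Subgroup.card_bot] at this
    omega

set_option maxRecDepth 10000 in
theorem numSubgroups_dihedralGroup_six : numSubgroups (DihedralGroup 6) = 16 := by
  rw [numSubgroups, Nat.card_congr (Subgroup.equivFinsetDivClosed _), Nat.card_eq_fintype_card]
  decide

theorem nps_D12 : nps (DihedralGroup 6) = 13 := by
  have h := nps_add_ps (G := DihedralGroup 6)
  rw [ps_dihedralGroup_six, numSubgroups_dihedralGroup_six] at h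
  omega
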